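/- Let L be a complex Banach Lie algebra, let Z be its centre, and let C denote the closure of the linear span of {⁅a,b⁆ : a, b ∈ L}. With the convention that an intersection over an empty family equals L: (i) the intersection of all maximal proper closed Lie ideals of finite codimension in L is contained in C; (ii) C ∩ Z is contained in the intersection of all maximal proper closed Lie subalgebras of finite codimension in L; (iii) if L is solvable, then the intersection of all maximal proper closed Lie ideals of finite codimension in L equals C. -/

import Mathlib

/-!
A nonzero continuous linear functional vanishing on all brackets has as kernel a closed Lie ideal of
codimension one; by Hahn–Banach such functionals separate any point outside the closed derived
subspace `C`, which gives (i). For (ii), a central element `x` outside a maximal subalgebra `M`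
yields the subalgebra `M + ℂx`, which must be all of `L`; since `x` is central every bracket then
lies in `M`, so the closed `M` contains `C` and hence `x`. For (iii), if a maximal ideal `J` did
not contain `[L, L]`, then `J + L⁽ᵏ⁾ = L` for every term `L⁽ᵏ⁾` of the derived series, which is
absurd once the series reaches zero.
-/

section LieAlgebra

variable {K L : Type*} [Field K] [LieRing L] [LieAlgebra K L]

def Submodule.toLieIdealOfLieMem (S : Submodule K L) (h : ∀ a b : L, ⁅a, b⁆ ∈ S) :
    LieIdeal K L :=
  { S with lie_mem := fun _ => h _ _ }

theorem Submodule.isCoatom_toLieIdealOfLieMem {S : Submodule K L} (h : ∀ a b : L, ⁅a, b⁆ ∈ S)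
    (hS : IsCoatom S) : IsCoatom (S.toLieIdealOfLieMem h) := by
  refine ⟨fun htop => hS.1 ?_, fun I hI => ?_⟩
  · exact (LieSubmodule.toSubmodule_eq_top (N := S.toLieIdealOfLieMem h)).mpr htop
  · exact (LieSubmodule.toSubmodule_eq_top (N := I)).mp
      (hS.2 _ ((LieSubmodule.toSubmodule_orderEmbedding K L L).lt_iff_lt.mpr hI))

theorem LieSubalgebra.lie_mem_of_mem_sup_span_center {M : LieSubalgebra K L} {x y z : L}
    (hx : x ∈ LieAlgebra.center K L) (hy : y ∈ M.toSubmodule ⊔ K ∙ x)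
    (hz : z ∈ M.toSubmodule ⊔ K ∙ x) : ⁅y, z⁆ ∈ M := by
  have hx' : ∀ w : L, ⁅w, x⁆ = 0 := (LieModule.mem_maxTrivSubmodule K L L x).mp hx
  obtain ⟨m, hm, _, hu, rfl⟩ := Submodule.mem_sup.mp hy
  obtain ⟨c, rfl⟩ := Submodule.mem_span_singleton.mp hu
  obtain ⟨m', hm', _, hu', rfl⟩ := Submodule.mem_sup.mp hz
  obtain ⟨c', rfl⟩ := Submodule.mem_span_singleton.mp hu'
  have hxw : ∀ w : L, ⁅x, w⁆ = 0 := fun w => by rw [← lie_skew, hx', neg_zero]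
  simpa [lie_add, add_lie, lie_smul, smul_lie, hx', hxw] using M.lie_mem hm hm'

def LieSubalgebra.supSpanCenter (M : LieSubalgebra K L) {x : L}
    (hx : x ∈ LieAlgebra.center K L) : LieSubalgebra K L :=
  { M.toSubmodule ⊔ K ∙ x with
    lie_mem' := fun hy hz => Submodule.mem_sup_left (lie_mem_of_mem_sup_span_center hx hy hz) }

theorem LieSubalgebra.lie_mem_of_mem_center_of_notMem {M : LieSubalgebra K L}
    (hM : ∀ N : LieSubalgebra K L, M < N → N = ⊤) {x : L} (hx : x ∈ LieAlgebra.center K L)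
    (hxM : x ∉ M) (a b : L) : ⁅a, b⁆ ∈ M := by
  have hxN : x ∈ M.supSpanCenter hx :=
    Submodule.mem_sup_right (Submodule.mem_span_singleton_self x)
  have hN : M.supSpanCenter hx = ⊤ :=
    hM _ (lt_of_le_of_ne (fun _ => Submodule.mem_sup_left) (fun h => hxM (h ▸ hxN)))
  have hmem : ∀ w : L, w ∈ M.toSubmodule ⊔ K ∙ x := fun w =>
    show w ∈ M.supSpanCenter hx by rw [hN]; exact LieSubalgebra.mem_top w
  exact lie_mem_of_mem_sup_span_center hx (hmem a) (hmem b)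

theorem LieIdeal.lie_sup_self_le_sup_lie (J A : LieIdeal K L) :
    ⁅J ⊔ A, J ⊔ A⁆ ≤ J ⊔ ⁅A, A⁆ := by
  rw [LieSubmodule.sup_lie, LieSubmodule.lie_sup, LieSubmodule.lie_sup]
  refine sup_le (sup_le ?_ ?_) (sup_le ?_ le_sup_right) <;>
    apply le_sup_of_le_left
  · exact LieSubmodule.lie_le_left _ _
  · exact LieSubmodule.lie_le_left _ _
  · exact LieSubmodule.lie_le_right _ _

theorem LieIdeal.sup_derivedSeries_eq_top {J : LieIdeal K L}
    (hJ : J ⊔ ⁅(⊤ : LieIdeal K L), ⊤⁆ = ⊤) (k : ℕ) :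
    J ⊔ LieAlgebra.derivedSeries K L k = ⊤ := by
  induction k with
  | zero => exact sup_top_eq J
  | succ k ih =>
    rw [eq_top_iff, ← hJ, LieAlgebra.derivedSeries_def, LieAlgebra.derivedSeriesOfIdeal_succ]
    calc J ⊔ ⁅⊤, ⊤⁆ = J ⊔ ⁅J ⊔ LieAlgebra.derivedSeries K L k,
          J ⊔ LieAlgebra.derivedSeries K L k⁆ := by rw [ih]
      _ ≤ J ⊔ (J ⊔ ⁅LieAlgebra.derivedSeries K L k, LieAlgebra.derivedSeries K L k⁆) :=
          sup_le_sup_left (lie_sup_self_le_sup_lie _ _) J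
      _ = J ⊔ ⁅LieAlgebra.derivedSeries K L k, LieAlgebra.derivedSeries K L k⁆ := by
          rw [← sup_assoc, sup_idem]

theorem LieIdeal.lie_top_top_le_of_isCoatom [LieAlgebra.IsSolvable L] {J : LieIdeal K L}
    (hJ : IsCoatom J) : ⁅(⊤ : LieIdeal K L), ⊤⁆ ≤ J := by
  by_contra hle
  obtain ⟨k, hk⟩ := LieAlgebra.IsSolvable.solvable K L
  have := sup_derivedSeries_eq_top (hJ.2 _ (left_lt_sup.mpr hle)) k
  rw [hk, sup_bot_eq] at this
  exact hJ.1 this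

variable (K L) [TopologicalSpace L]

def LieIdeal.maxClosedFinCodim : Set (LieIdeal K L) :=
  {J | J ≠ ⊤ ∧ IsClosed (J : Set L) ∧ FiniteDimensional K (L ⧸ (J : Submodule K L)) ∧
    ∀ I : LieIdeal K L, J < I → I = ⊤}

def LieSubalgebra.maxClosedFinCodim : Set (LieSubalgebra K L) :=
  {M | M ≠ ⊤ ∧ IsClosed (M : Set L) ∧ FiniteDimensional K (L ⧸ M.toSubmodule) ∧
    ∀ N : LieSubalgebra K L, M < N → N = ⊤}

variable {K L}

theorem LieIdeal.ker_mem_maxClosedFinCodim [TopologicalSpace K] [T1Space K] (f : L →L[K] K)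
    (hf : f ≠ 0) (h : ∀ a b : L, ⁅a, b⁆ ∈ LinearMap.ker (f : L →ₗ[K] K)) :
    (LinearMap.ker (f : L →ₗ[K] K)).toLieIdealOfLieMem h ∈ maxClosedFinCodim K L := by
  have hsurj : Function.Surjective f :=
    (f : L →ₗ[K] K).surjective_or_eq_zero.resolve_right fun h0 =>
      hf (ContinuousLinearMap.coe_injective h0)
  have hcoatom :=
    Submodule.isCoatom_toLieIdealOfLieMem h (LinearMap.isCoatom_ker_of_surjective hsurj)
  exact ⟨hcoatom.1, f.isClosed_ker,
    LinearEquiv.finiteDimensional (f : L →ₗ[K] K).quotKerEquivRange.symm, hcoatom.2⟩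

theorem LieIdeal.map_eq_zero_of_mem_sInf_maxClosedFinCodim [TopologicalSpace K] [T1Space K]
    (f : L →L[K] K) (hf : ∀ a b : L, f ⁅a, b⁆ = 0) {x : L}
    (hx : x ∈ sInf (maxClosedFinCodim K L)) : f x = 0 := by
  by_contra hfx
  have hf0 : f ≠ 0 := fun h0 => hfx (by simp [h0])
  exact hfx (sInf_le (ker_mem_maxClosedFinCodim f hf0 hf) hx)

theorem LieSubalgebra.closure_span_lie_inter_center_subset_sInf :
    closure (Submodule.span K {z : L | ∃ a b : L, z = ⁅a, b⁆} : Set L) ∩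
      (LieAlgebra.center K L : Set L) ⊆
        ((sInf (maxClosedFinCodim K L) : LieSubalgebra K L) : Set L) := by
  rintro x ⟨hxC, hxZ⟩
  rw [LieSubalgebra.coe_sInf]
  refine Set.mem_iInter₂.mpr fun M hM => ?_
  by_contra hxM
  have hspan : (Submodule.span K {z : L | ∃ a b : L, z = ⁅a, b⁆} : Set L) ⊆ M :=
    Submodule.span_le.mpr <| by
      rintro _ ⟨a, b, rfl⟩
      exact lie_mem_of_mem_center_of_notMem hM.2.2.2 hxZ hxM a b
  exact hxM (closure_minimal hspan hM.2.1 hxC)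

theorem LieIdeal.closure_span_lie_subset_sInf [LieAlgebra.IsSolvable L] :
    closure (Submodule.span K {z : L | ∃ a b : L, z = ⁅a, b⁆} : Set L) ⊆
      ((sInf (maxClosedFinCodim K L) : LieIdeal K L) : Set L) := by
  rw [LieSubmodule.coe_sInf]
  refine Set.subset_iInter₂ fun J ⟨hJ, hJc, _, hJmax⟩ => closure_minimal ?_ hJc
  refine Submodule.span_le.mpr ?_
  rintro _ ⟨a, b, rfl⟩
  exact lie_top_top_le_of_isCoatom ⟨hJ, hJmax⟩
    (LieSubmodule.lie_mem_lie (LieSubmodule.mem_top a) (LieSubmodule.mem_top b))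

end LieAlgebra

theorem Submodule.exists_dual_map_ne_zero_of_notMem_closure {𝕜 E : Type*} [RCLike 𝕜]
    [NormedAddCommGroup E] [NormedSpace 𝕜 E] (p : Submodule 𝕜 E) {x : E}
    (hx : x ∉ closure (p : Set E)) : ∃ f : StrongDual 𝕜 E, f x ≠ 0 ∧ ∀ y ∈ p, f y = 0 := by
  have : IsClosed (p.topologicalClosure : Set E) := p.isClosed_topologicalClosure
  have hne : p.topologicalClosure.mkQ x ≠ 0 := by
    rwa [ne_eq, Submodule.mkQ_apply, Submodule.Quotient.mk_eq_zero, ← SetLike.mem_coe,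
      Submodule.topologicalClosure_coe]
  obtain ⟨g, hg⟩ := SeparatingDual.exists_ne_zero (R := 𝕜) hne
  refine ⟨g.comp p.topologicalClosure.mkQL, hg, fun y hy => ?_⟩
  simp [(Submodule.Quotient.mk_eq_zero _).mpr (p.le_topologicalClosure hy)]

abbrev NormedAddCommGroup.ofDistAddRight {E : Type*} [AddCommGroup E] [MetricSpace E]
    (h : ∀ x y z : E, dist (x + z) (y + z) = dist x y) : NormedAddCommGroup E :=
  { ‹AddCommGroup E›, ‹MetricSpace E› with
    norm := fun x => dist x 0
    dist_eq := fun x y => by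
      rw [← h (-x + y) 0 x, zero_add, dist_comm, neg_add_cancel_comm] }

theorem stmt_12_general {L : Type*} [LieRing L] [LieAlgebra ℂ L] [MetricSpace L]
    (hdist : ∀ x y z : L, dist (x + z) (y + z) = dist x y)
    (hnorm : ∀ (c : ℂ) (x : L), dist (c • x) 0 = ‖c‖ * dist x 0) :
    (((sInf {J : LieIdeal ℂ L | J ≠ ⊤ ∧ IsClosed (J : Set L) ∧
          FiniteDimensional ℂ (L ⧸ (J : Submodule ℂ L)) ∧
          ∀ I : LieIdeal ℂ L, J < I → I = ⊤} : LieIdeal ℂ L) : Set L) ⊆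
        closure ↑(Submodule.span ℂ {z : L | ∃ a b : L, z = ⁅a, b⁆})) ∧
    ((closure ↑(Submodule.span ℂ {z : L | ∃ a b : L, z = ⁅a, b⁆}) ∩
          ((LieAlgebra.center ℂ L : LieIdeal ℂ L) : Set L)) ⊆
        ((sInf {M : LieSubalgebra ℂ L | M ≠ ⊤ ∧ IsClosed (M : Set L) ∧
          FiniteDimensional ℂ (L ⧸ M.toSubmodule) ∧
          ∀ N : LieSubalgebra ℂ L, M < N → N = ⊤} : LieSubalgebra ℂ L) : Set L)) ∧
    (LieAlgebra.IsSolvable L →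
      ((sInf {J : LieIdeal ℂ L | J ≠ ⊤ ∧ IsClosed (J : Set L) ∧
          FiniteDimensional ℂ (L ⧸ (J : Submodule ℂ L)) ∧
          ∀ I : LieIdeal ℂ L, J < I → I = ⊤} : LieIdeal ℂ L) : Set L) =
        closure ↑(Submodule.span ℂ {z : L | ∃ a b : L, z = ⁅a, b⁆})) := by
  let _ : NormedAddCommGroup L := .ofDistAddRight hdist
  let _ : NormedSpace ℂ L := ⟨fun c x => (hnorm c x).le⟩
  have h_sInf_subset : ((sInf (LieIdeal.maxClosedFinCodim ℂ L) : LieIdeal ℂ L) : Set L) ⊆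
      closure (Submodule.span ℂ {z : L | ∃ a b : L, z = ⁅a, b⁆}) := by
    intro x hx
    by_contra hxC
    obtain ⟨f, hfx, hf⟩ := Submodule.exists_dual_map_ne_zero_of_notMem_closure _ hxC
    exact hfx (LieIdeal.map_eq_zero_of_mem_sInf_maxClosedFinCodim f
      (fun a b => hf _ (Submodule.subset_span ⟨a, b, rfl⟩)) hx)
  exact ⟨h_sInf_subset, LieSubalgebra.closure_span_lie_inter_center_subset_sInf,
    fun _ => h_sInf_subset.antisymm LieIdeal.closure_span_lie_subset_sInf⟩

/-- Relations between the Jacobson/Frattini-type intersections, the closed derived ideal C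
and the centre Z: P_{𝔍max}(L) ⊆ C; C ∩ Z ⊆ P_{𝔖max}(L); if L is solvable then
P_{𝔍max}(L) = C. -/
theorem stmt_12 {L : Type*} [LieRing L] [LieAlgebra ℂ L] [MetricSpace L] [CompleteSpace L]
    (hdist : ∀ x y z : L, dist (x + z) (y + z) = dist x y)
    (hnorm : ∀ (c : ℂ) (x : L), dist (c • x) 0 = ‖c‖ * dist x 0)
    (hbracket : Continuous fun p : L × L => ⁅p.1, p.2⁆) :
    (((sInf {J : LieIdeal ℂ L | J ≠ ⊤ ∧ IsClosed (J : Set L) ∧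
          FiniteDimensional ℂ (L ⧸ (J : Submodule ℂ L)) ∧
          ∀ I : LieIdeal ℂ L, J < I → I = ⊤} : LieIdeal ℂ L) : Set L) ⊆
        closure ↑(Submodule.span ℂ {z : L | ∃ a b : L, z = ⁅a, b⁆})) ∧
    ((closure ↑(Submodule.span ℂ {z : L | ∃ a b : L, z = ⁅a, b⁆}) ∩
          ((LieAlgebra.center ℂ L : LieIdeal ℂ L) : Set L)) ⊆
        ((sInf {M : LieSubalgebra ℂ L | M ≠ ⊤ ∧ IsClosed (M : Set L) ∧
          FiniteDimensional ℂ (L ⧸ M.toSubmodule) ∧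
          ∀ N : LieSubalgebra ℂ L, M < N → N = ⊤} : LieSubalgebra ℂ L) : Set L)) ∧
    (LieAlgebra.IsSolvable L →
      ((sInf {J : LieIdeal ℂ L | J ≠ ⊤ ∧ IsClosed (J : Set L) ∧
          FiniteDimensional ℂ (L ⧸ (J : Submodule ℂ L)) ∧
          ∀ I : LieIdeal ℂ L, J < I → I = ⊤} : LieIdeal ℂ L) : Set L) =
        closure ↑(Submodule.span ℂ {z : L | ∃ a b : L, z = ⁅a, b⁆})) :=
  stmt_12_general hdist hnorm
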